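/- Let T be an operator on a complex Hilbert space. Each connected component of ℂ \ closure(Num T) is either disjoint from the resolvent set of T or entirely contained in it. -/

import Mathlib

/-- The resolvent set of a (possibly unbounded) operator `T` defined on the subspace `dom`:
those `ζ` such that `T - ζ` has a bounded everywhere-defined (two-sided) inverse. -/
def ResolventSet {H : Type*} [NormedAddCommGroup H] [NormedSpace ℂ H]
    (dom : Submodule ℂ H) (T : dom →ₗ[ℂ] H) : Set ℂ :=
  {ζ | ∃ (R : H →L[ℂ] H) (hmem : ∀ y : H, R y ∈ dom),
    (∀ y : H, T ⟨R y, hmem y⟩ - ζ • R y = y) ∧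
    (∀ x : dom, R (T x - ζ • (x : H)) = (x : H))}

/-!
Both the resolvent set and its complement in `U = ℂ \ closure (Num T)` are open, so no
preconnected subset of `U` meets both. Openness of the resolvent set is the Neumann series.
For the complement, `‖(T - ζ) x‖ ≥ dist(ζ, Num T) ‖x‖` gives `‖R(ζ)‖ ≤ 1 / dist(ζ, Num T)`,
so every resolvent point `μ` is the centre of a resolvent disk of radius `dist(μ, Num T)`.
Hence if `ζ ∈ U` is not a resolvent point, neither is any `μ` closer to `ζ` than to `Num T`.
-/

open Metric

section

variable {H : Type*} [NormedAddCommGroup H] [InnerProductSpace ℂ H]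
  {dom : Submodule ℂ H} {T : dom →ₗ[ℂ] H}

def numericalRange (dom : Submodule ℂ H) (T : dom →ₗ[ℂ] H) : Set ℂ :=
  {z | ∃ ψ : dom, ‖(ψ : H)‖ = 1 ∧ inner ℂ (ψ : H) (T ψ) = z}

lemma mul_norm_le_norm_sub_smul_of_le_dist_numericalRange {ζ : ℂ} {d : ℝ}
    (hd : ∀ w ∈ numericalRange dom T, d ≤ dist w ζ) (x : dom) :
    d * ‖(x : H)‖ ≤ ‖T x - ζ • (x : H)‖ := by
  rcases eq_or_ne (x : H) 0 with hx | hx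
  · simp [hx]
  set n : ℝ := ‖(x : H)‖
  have hn : 0 < n := norm_pos_iff.2 hx
  set ψ : dom := (n⁻¹ : ℂ) • x
  have hψ : ‖(ψ : H)‖ = 1 := by
    simp only [ψ, Submodule.coe_smul, norm_smul, norm_inv, Complex.norm_real, Real.norm_eq_abs,
      abs_of_pos hn]
    exact inv_mul_cancel₀ hn.ne'
  have hinner :
      inner ℂ (x : H) (T x - ζ • (x : H)) = n ^ 2 * (inner ℂ (ψ : H) (T ψ) - ζ) := by
    have hn' : (n : ℂ) ≠ 0 := by exact_mod_cast hn.ne'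
    simp only [ψ, map_smul, Submodule.coe_smul, inner_smul_left, inner_smul_right,
      inner_sub_right, inner_self_eq_norm_sq_to_K, Complex.conj_ofReal, map_inv₀]
    field_simp
    rfl
  refine le_of_mul_le_mul_left ?_ hn
  calc n * (d * n) = n ^ 2 * d := by ring
    _ ≤ n ^ 2 * ‖inner ℂ (ψ : H) (T ψ) - ζ‖ := by
        gcongr
        exact dist_eq_norm _ ζ ▸ hd _ ⟨ψ, hψ, rfl⟩
    _ = ‖inner ℂ (x : H) (T x - ζ • (x : H))‖ := by
        rw [hinner, norm_mul, norm_pow, Complex.norm_real, Real.norm_of_nonneg hn.le]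
    _ ≤ n * ‖T x - ζ • (x : H)‖ := norm_inner_le_norm _ _

variable [CompleteSpace H]

lemma mem_resolventSet_of_norm_smul_lt_one {ζ μ : ℂ} {R : H →L[ℂ] H} (hmem : ∀ y, R y ∈ dom)
    (hright : ∀ y : H, T ⟨R y, hmem y⟩ - ζ • R y = y)
    (hleft : ∀ x : dom, R (T x - ζ • (x : H)) = (x : H))
    (hsmall : ‖(μ - ζ) • R‖ < 1) : μ ∈ ResolventSet dom T := by
  -- `R(μ) = R(ζ) (1 - (μ - ζ) R(ζ))⁻¹`
  set u := Units.oneSub _ hsmall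
  set S : H →L[ℂ] H := ↑u⁻¹
  have hSright : ∀ w, S w - (μ - ζ) • R (S w) = w := fun w =>
    congr($(u.mul_inv) w)
  have hSleft : ∀ w, S (w - (μ - ζ) • R w) = w := fun w =>
    congr($(u.inv_mul) w)
  have hRu : Commute R u := (Commute.one_right R).sub_right ((Commute.refl R).smul_right _)
  have hRS : ∀ w, R (S w) = S (R w) := fun w => congr($(hRu.units_inv_right) w)
  refine ⟨R.comp S, fun y => hmem (S y), fun y => ?_, fun x => ?_⟩
  · calc T ⟨R (S y), _⟩ - μ • R (S y)
        = (T ⟨R (S y), hmem (S y)⟩ - ζ • R (S y)) - (μ - ζ) • R (S y) := by module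
      _ = y := by rw [hright, hSright]
  · calc R (S (T x - μ • (x : H)))
        = S (R ((T x - ζ • (x : H)) - (μ - ζ) • (x : H))) := by
          rw [hRS]; congr 2; module
      _ = x := by rw [map_sub, map_smul, hleft, hSleft]

lemma isOpen_resolventSet : IsOpen (ResolventSet dom T) := by
  refine isOpen_iff.2 fun ζ ⟨R, hmem, hright, hleft⟩ =>
    ⟨(‖R‖ + 1)⁻¹, by positivity, fun μ hμ => ?_⟩
  refine mem_resolventSet_of_norm_smul_lt_one hmem hright hleft ?_
  rw [mem_ball, dist_eq_norm] at hμ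
  calc ‖(μ - ζ) • R‖ ≤ ‖μ - ζ‖ * (‖R‖ + 1) := by rw [norm_smul]; gcongr; linarith
    _ < (‖R‖ + 1)⁻¹ * (‖R‖ + 1) := by gcongr
    _ = 1 := inv_mul_cancel₀ (by positivity)

lemma mem_resolventSet_of_dist_lt {ζ μ : ℂ} (hζ : ζ ∈ ResolventSet dom T) {d : ℝ}
    (hd : ∀ w ∈ numericalRange dom T, d ≤ dist w ζ) (hμ : dist μ ζ < d) :
    μ ∈ ResolventSet dom T := by
  obtain ⟨R, hmem, hright, hleft⟩ := hζ
  have hd₀ : 0 < d := dist_nonneg.trans_lt hμ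
  have hR : ‖R‖ ≤ d⁻¹ := R.opNorm_le_bound (by positivity) fun y => by
    rw [inv_mul_eq_div, le_div_iff₀' hd₀]
    simpa only [hright] using mul_norm_le_norm_sub_smul_of_le_dist_numericalRange hd ⟨R y, hmem y⟩
  refine mem_resolventSet_of_norm_smul_lt_one hmem hright hleft ?_
  calc ‖(μ - ζ) • R‖ ≤ dist μ ζ * d⁻¹ := by rw [norm_smul, ← dist_eq_norm]; gcongr
    _ < d * d⁻¹ := by gcongr
    _ = 1 := mul_inv_cancel₀ hd₀.ne'

lemma IsOpen.sdiff_resolventSet {U : Set ℂ} (hU : IsOpen U)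
    (hdisj : Disjoint U (numericalRange dom T)) : IsOpen (U \ ResolventSet dom T) := by
  refine isOpen_iff.2 fun ζ ⟨hζU, hζ⟩ => ?_
  obtain ⟨ε, hε, hball⟩ := isOpen_iff.1 hU ζ hζU
  refine ⟨ε / 2, half_pos hε, fun μ hμ =>
    ⟨hball (ball_subset_ball (half_le_self hε.le) hμ),
      fun hμR => hζ (mem_resolventSet_of_dist_lt hμR (d := ε / 2) (fun w hw => ?_) ?_)⟩⟩
  · have hwζ : ε ≤ dist w ζ := not_lt.1 fun h => hdisj.ne_of_mem (hball h) hw rfl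
    linarith [dist_triangle w μ ζ, mem_ball.1 hμ]
  · rwa [dist_comm]

end

/-- For an operator `T` in a complex Hilbert space, each connected component
of `ℂ \ closure (Num T)` is either entirely contained in the resolvent set of `T` or
disjoint from it. -/
theorem connectedComponent_subset_or_disjoint_resolvent {H : Type*} [NormedAddCommGroup H]
    [InnerProductSpace ℂ H] [CompleteSpace H] (dom : Submodule ℂ H) (T : dom →ₗ[ℂ] H)
    (Num : Set ℂ)
    (hNum : Num = {z : ℂ | ∃ ψ : dom, ‖(ψ : H)‖ = 1 ∧ (inner ℂ ((ψ : H)) (T ψ) : ℂ) = z}) :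
    ∀ z ∈ (closure Num)ᶜ,
      connectedComponentIn (closure Num)ᶜ z ⊆ ResolventSet dom T ∨
      Disjoint (connectedComponentIn (closure Num)ᶜ z) (ResolventSet dom T) := by
  intro z _
  change Num = numericalRange dom T at hNum
  set U := (closure Num)ᶜ
  have hU : IsOpen U := isClosed_closure.isOpen_compl
  have hdisj : Disjoint U (numericalRange dom T) :=
    hNum ▸ disjoint_compl_left.mono_right subset_closure
  refine (isPreconnected_connectedComponentIn.subset_or_subset isOpen_resolventSet
    (hU.sdiff_resolventSet hdisj) disjoint_sdiff_self_right ?_).imp id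
    fun h => Set.disjoint_of_subset_left h disjoint_sdiff_self_left
  exact (connectedComponentIn_subset U z).trans (by simp)
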